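/- arXiv:1610.08249 — 3 statements merged into one kernel-verified Lean document; each statement's English description precedes it below -/
import Mathlib

section
/- If C is a set of probability measures on X^∞ with V_C > 0, then no predictor is admissible: for every probability measure ρ on X^∞ there exists a probability measure ρ' such that D(μ,ρ') ≤ D(μ,ρ) for all μ ∈ C and D(μ₀,ρ') < D(μ₀,ρ) for some μ₀ ∈ C. (Concretely, one can take μ₀ ∈ C with D(μ₀,ρ) > 0 and ρ' := (1/2)(ρ + μ₀).) -/
/-!
Since `V_C > 0`, the predictor `ρ` has `D(μ₀, ρ) > 0` for some `μ₀ ∈ C`. The mixture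
`ρ' = (ρ + μ₀)/2` is at least `ρ/2` on every cylinder, so `d_n(μ, ρ') ≤ d_n(μ, ρ) + 1` for
every `μ`; the extra bit disappears after dividing by `n`, giving `D(μ, ρ') ≤ D(μ, ρ)`.
Since `ρ'` is also at least `μ₀/2`, the same bound against `μ₀` itself gives
`D(μ₀, ρ') ≤ D(μ₀, μ₀) = 0 < D(μ₀, ρ)`.
-/

open MeasureTheory Filter
open scoped ENNReal

variable {X : Type} [Fintype X] [Nonempty X] [MeasurableSpace X] [DiscreteMeasurableSpace X]

/-- Cylinder set of sequences beginning with `x`. -/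
def cyl {X : Type} {n : ℕ} (x : Fin n → X) : Set (ℕ → X) :=
  {ω | ∀ i : Fin n, ω (i : ℕ) = x i}

/-- `p · log₂(p/q)` with the conventions `0 · log₂(0/q) = 0` and `p · log₂(p/0) = +∞` for `p > 0`. -/
noncomputable def klTerm (p q : ℝ) : EReal :=
  if p = 0 then 0 else if q = 0 then ⊤ else ((p * Real.logb 2 (p / q) : ℝ) : EReal)

/-- Expected cumulative KL divergence `d_n(μ,ρ)`. -/
noncomputable def klDiv (n : ℕ) (μ ρ : Measure (ℕ → X)) : EReal :=
  ∑ x : Fin n → X, klTerm (μ (cyl x)).toReal (ρ (cyl x)).toReal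

/-- Asymptotic average KL loss `D(μ,ρ)`. -/
noncomputable def Dbar (μ ρ : Measure (ℕ → X)) : EReal :=
  Filter.limsup (fun n : ℕ => (((n : ℝ)⁻¹ : ℝ) : EReal) * klDiv n μ ρ) Filter.atTop

/-- Minimax value `V_C`. -/
noncomputable def Vmin (C : Set (Measure (ℕ → X))) : EReal :=
  ⨅ ρ : {ρ : Measure (ℕ → X) // IsProbabilityMeasure ρ}, ⨆ μ ∈ C, Dbar μ ρ.1

/-- Countable mixture `Σ_k v_k μ_k`. -/
noncomputable def mixture (v : ℕ → ℝ) (μs : ℕ → Measure (ℕ → X)) : Measure (ℕ → X) :=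
  MeasureTheory.Measure.sum (fun k => ENNReal.ofReal (v k) • μs k)

open Topology

theorem EReal.coe_finset_sum {α : Type*} (s : Finset α) (f : α → ℝ) :
    ((∑ a ∈ s, f a : ℝ) : EReal) = ∑ a ∈ s, (f a : EReal) :=
  map_sum (⟨⟨Real.toEReal, EReal.coe_zero⟩, EReal.coe_add⟩ : ℝ →+ EReal) f s

theorem cyl_eq_preimage {α : Type} {n : ℕ} (x : Fin n → α) :
    cyl x = (fun (ω : ℕ → α) (i : Fin n) => ω i) ⁻¹' {x} := by
  ext ω
  simp [cyl, funext_iff]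

theorem two_smul_half_add {Ω : Type*} [MeasurableSpace Ω] (μ ν : Measure Ω) :
    (2 : ℝ≥0∞) • ((2 : ℝ≥0∞)⁻¹ • μ + (2 : ℝ≥0∞)⁻¹ • ν) = μ + ν := by
  simp only [smul_add, smul_smul, ENNReal.mul_inv_cancel two_ne_zero ENNReal.ofNat_ne_top,
    one_smul]

theorem klTerm_self (p : ℝ) : klTerm p p = 0 := by
  by_cases hp : p = 0 <;> simp [klTerm, hp]

theorem klTerm_le_add_of_le_two_mul {p q q' : ℝ} (hp : 0 ≤ p) (hq : 0 ≤ q) (h : q ≤ 2 * q') :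
    klTerm p q' ≤ klTerm p q + p := by
  rcases hp.eq_or_lt with rfl | hp
  · simp [klTerm]
  rcases hq.eq_or_lt with rfl | hq
  · simp [klTerm, hp.ne', EReal.top_add_of_ne_bot (EReal.coe_ne_bot p)]
  have hq' : 0 < q' := by linarith
  simp only [klTerm, hp.ne', hq.ne', hq'.ne', if_false, ← EReal.coe_add, EReal.coe_le_coe_iff]
  have hlog : Real.logb 2 (p / q') ≤ Real.logb 2 (p / q) + 1 := calc
    Real.logb 2 (p / q') ≤ Real.logb 2 (2 * (p / q)) :=
      Real.logb_le_logb_of_le (by norm_num) (by positivity) (by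
        rw [div_le_iff₀ hq', mul_div_assoc', div_mul_eq_mul_div, le_div_iff₀ hq]; nlinarith)
    _ = Real.logb 2 (p / q) + 1 := by
      rw [Real.logb_mul two_ne_zero (by positivity), Real.logb_self_eq_one one_lt_two, add_comm]
  nlinarith [mul_le_mul_of_nonneg_left hlog hp.le]

theorem limsup_inv_mul_le_of_le_add {u v : ℕ → EReal} (c : ℝ) (h : ∀ n, u n ≤ v n + c) :
    limsup (fun n : ℕ => (((n : ℝ)⁻¹ : ℝ) : EReal) * u n) atTop ≤
      limsup (fun n : ℕ => (((n : ℝ)⁻¹ : ℝ) : EReal) * v n) atTop := by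
  have hc : Tendsto (fun n : ℕ => (((n : ℝ)⁻¹ : ℝ) : EReal) * c) atTop (𝓝 0) := by
    simpa [← EReal.coe_mul] using
      EReal.tendsto_coe.2 (tendsto_inv_atTop_nhds_zero_nat.mul_const c)
  have hpointwise : ∀ n : ℕ, (((n : ℝ)⁻¹ : ℝ) : EReal) * u n ≤
      (((n : ℝ)⁻¹ : ℝ) : EReal) * v n + (((n : ℝ)⁻¹ : ℝ) : EReal) * c := fun n => by
    have hn : (0 : EReal) ≤ (((n : ℝ)⁻¹ : ℝ) : EReal) := EReal.coe_nonneg.2 (by positivity)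
    rw [← EReal.left_distrib_of_nonneg_of_ne_top hn (EReal.coe_ne_top _)]
    exact mul_le_mul_of_nonneg_left (h n) hn
  calc _ ≤ limsup (fun n : ℕ => (((n : ℝ)⁻¹ : ℝ) : EReal) * v n +
        (((n : ℝ)⁻¹ : ℝ) : EReal) * c) atTop := limsup_le_limsup (.of_forall hpointwise)
    _ ≤ _ := EReal.limsup_add_le (.inr (by simp [hc.limsup_eq])) (.inr (by simp [hc.limsup_eq]))
    _ = _ := by rw [hc.limsup_eq, add_zero]

section

variable {α : Type} [Fintype α] [MeasurableSpace α]

theorem sum_measure_cyl_toReal [MeasurableSingletonClass α] (μ : Measure (ℕ → α))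
    [IsProbabilityMeasure μ] (n : ℕ) :
    ∑ x : Fin n → α, (μ (cyl x)).toReal = 1 := by
  have hrestrict : Measurable fun (ω : ℕ → α) (i : Fin n) => ω i :=
    measurable_pi_lambda _ fun i => measurable_pi_apply _
  have hsum : ∑ x : Fin n → α, μ (cyl x) = 1 := by
    simp only [cyl_eq_preimage]
    rw [sum_measure_preimage_singleton _ fun x _ => hrestrict (measurableSet_singleton x),
      Finset.coe_univ, Set.preimage_univ, measure_univ]
  rw [← ENNReal.toReal_sum fun x _ => measure_ne_top μ _, hsum, ENNReal.toReal_one]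

theorem klDiv_self (n : ℕ) (μ : Measure (ℕ → α)) : klDiv n μ μ = 0 := by
  simp [klDiv, klTerm_self]

theorem klDiv_le_add_one [MeasurableSingletonClass α] {n : ℕ} (μ : Measure (ℕ → α))
    [IsProbabilityMeasure μ] {ρ ρ' : Measure (ℕ → α)} [IsFiniteMeasure ρ']
    (h : ρ ≤ (2 : ℝ≥0∞) • ρ') :
    klDiv n μ ρ' ≤ klDiv n μ ρ + 1 := calc
  klDiv n μ ρ' ≤ ∑ x : Fin n → α,
      (klTerm (μ (cyl x)).toReal (ρ (cyl x)).toReal + ((μ (cyl x)).toReal : EReal)) := by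
    refine Finset.sum_le_sum fun x _ => klTerm_le_add_of_le_two_mul
      ENNReal.toReal_nonneg ENNReal.toReal_nonneg ?_
    have hx := Measure.le_iff'.1 h (cyl x)
    rw [Measure.smul_apply, smul_eq_mul] at hx
    simpa using
      ENNReal.toReal_mono (ENNReal.mul_ne_top ENNReal.ofNat_ne_top (measure_ne_top _ _)) hx
  _ = klDiv n μ ρ + 1 := by
    rw [Finset.sum_add_distrib, ← EReal.coe_finset_sum, sum_measure_cyl_toReal, EReal.coe_one]
    rfl

theorem Dbar_le_of_le_two_smul [MeasurableSingletonClass α] (μ : Measure (ℕ → α))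
    [IsProbabilityMeasure μ] {ρ ρ' : Measure (ℕ → α)} [IsFiniteMeasure ρ']
    (h : ρ ≤ (2 : ℝ≥0∞) • ρ') :
    Dbar μ ρ' ≤ Dbar μ ρ :=
  limsup_inv_mul_le_of_le_add 1 fun _ => klDiv_le_add_one μ h

theorem Dbar_self (μ : Measure (ℕ → α)) : Dbar μ μ = 0 := by
  simp [Dbar, klDiv_self]

theorem exists_pos_Dbar_of_pos_Vmin {C : Set (Measure (ℕ → α))} (hV : 0 < Vmin C)
    {ρ : Measure (ℕ → α)} (hρ : IsProbabilityMeasure ρ) : ∃ μ ∈ C, 0 < Dbar μ ρ := by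
  have hsup : 0 < ⨆ μ ∈ C, Dbar μ ρ :=
    hV.trans_le (iInf_le (fun ρ' : {ρ // IsProbabilityMeasure ρ} => ⨆ μ ∈ C, Dbar μ ρ'.1) ⟨ρ, hρ⟩)
  simpa [lt_biSup_iff] using hsup

end

/-- If V_C > 0 then no predictor is admissible: for every probability
measure ρ there is a probability measure ρ' that is better, i.e. D(μ,ρ') ≤ D(μ,ρ) for
all μ ∈ C with strict inequality for some μ₀ ∈ C. -/
theorem statement3 (C : Set (Measure (ℕ → X))) (hC : ∀ μ ∈ C, IsProbabilityMeasure μ)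
    (hV : 0 < Vmin C) (ρ : Measure (ℕ → X)) (hρ : IsProbabilityMeasure ρ) :
    ∃ ρ' : Measure (ℕ → X), IsProbabilityMeasure ρ' ∧
      (∀ μ ∈ C, Dbar μ ρ' ≤ Dbar μ ρ) ∧ ∃ μ₀ ∈ C, Dbar μ₀ ρ' < Dbar μ₀ ρ := by
  obtain ⟨μ₀, hμ₀C, hμ₀⟩ := exists_pos_Dbar_of_pos_Vmin hV hρ
  have := hC μ₀ hμ₀C
  set ρ' := (2 : ℝ≥0∞)⁻¹ • ρ + (2 : ℝ≥0∞)⁻¹ • μ₀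
  have hρ' : IsProbabilityMeasure ρ' := ⟨by simp [ρ', ENNReal.inv_two_add_inv_two]⟩
  refine ⟨ρ', hρ', fun μ hμ => ?_, μ₀, hμ₀C, ?_⟩
  · have := hC μ hμ
    exact Dbar_le_of_le_two_smul μ (two_smul_half_add ρ μ₀ ▸ Measure.le_add_right le_rfl)
  · calc Dbar μ₀ ρ' ≤ Dbar μ₀ μ₀ :=
          Dbar_le_of_le_two_smul μ₀ (two_smul_half_add ρ μ₀ ▸ Measure.le_add_left le_rfl)
      _ = 0 := Dbar_self μ₀
      _ < Dbar μ₀ ρ := hμ₀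
end

section
/- (Greedy covering lemma.) Let S be a finite set, ρ a probability measure on S, and 𝒯 a nonempty family of subsets of S. Define recursively T_0 := ∅ and, for l ≥ 1, T_l := T_{l−1} ∪ A_l, where A_l ∈ 𝒯 is any set maximizing ρ(A \ T_{l−1}) over A ∈ 𝒯. Then for every l ≥ 1 and every A ∈ 𝒯, ρ(A \ T_l) ≤ 1/l. -/
/-- greedy covering lemma: S a finite set, ρ a probability measure on S
(a nonnegative function summing to 1, with ρ of a subset the sum of its point masses),
𝒯 a nonempty family of subsets of S. If T_0 = ∅ and each T_{l+1} = T_l ∪ A_{l+1} where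
A_{l+1} ∈ 𝒯 maximizes ρ(A \ T_l) over A ∈ 𝒯, then ρ(B \ T_l) ≤ 1/l for every l ≥ 1 and
every B ∈ 𝒯. -/
theorem statement9 {S : Type} [Fintype S] [DecidableEq S]
    (ρ : S → ℝ) (hρ : ∀ s, 0 ≤ ρ s) (hsum : ∑ s, ρ s = 1)
    (𝒯 : Set (Finset S)) (h𝒯 : 𝒯.Nonempty)
    (T A : ℕ → Finset S) (hT0 : T 0 = ∅)
    (hmem : ∀ l : ℕ, A (l + 1) ∈ 𝒯)
    (hstep : ∀ l : ℕ, T (l + 1) = T l ∪ A (l + 1))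
    (hgreedy : ∀ l : ℕ, ∀ B ∈ 𝒯, ∑ s ∈ B \ T l, ρ s ≤ ∑ s ∈ A (l + 1) \ T l, ρ s) :
    ∀ l : ℕ, 1 ≤ l → ∀ B ∈ 𝒯, ∑ s ∈ B \ T l, ρ s ≤ 1 / (l : ℝ) := by
  set g : ℕ → ℝ := fun l => ∑ s ∈ A (l + 1) \ T l, ρ s with hg
  have hTmono : ∀ l, T l ⊆ T (l + 1) := by
    intro l
    rw [hstep l]; exact Finset.subset_union_left
  have hganti : ∀ l, g (l + 1) ≤ g l := by
    intro l
    calc g (l + 1) = ∑ s ∈ A (l + 2) \ T (l + 1), ρ s := rfl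
      _ ≤ ∑ s ∈ A (l + 2) \ T l, ρ s := by
          apply Finset.sum_le_sum_of_subset_of_nonneg
          · exact Finset.sdiff_subset_sdiff (le_refl _) (hTmono l)
          · intro s _ _; exact hρ s
      _ ≤ g l := hgreedy l _ (hmem (l + 1))
  have hganti' : ∀ i j, i ≤ j → g j ≤ g i := by
    intro i j hij
    induction j with
    | zero => simp_all
    | succ n ih =>
      rcases Nat.lt_or_ge i (n + 1) with h | h
      · exact le_trans (hganti n) (ih (Nat.lt_succ_iff.mp h))
      · have : i = n + 1 := le_antisymm hij h
        subst this; exact le_refl _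
  have hTsum : ∀ l, ∑ s ∈ T l, ρ s = ∑ i ∈ Finset.range l, g i := by
    intro l
    induction l with
    | zero => simp [hT0]
    | succ n ih =>
      rw [Finset.sum_range_succ, ← ih, hstep n]
      have : T n ∪ A (n + 1) = T n ∪ (A (n + 1) \ T n) := by
        rw [Finset.union_sdiff_self_eq_union]
      rw [this, Finset.sum_union Finset.disjoint_sdiff]
  have hT1 : ∀ l, ∑ s ∈ T l, ρ s ≤ 1 := by
    intro l
    rw [← hsum]
    apply Finset.sum_le_sum_of_subset_of_nonneg (Finset.subset_univ _)
    intro s _ _; exact hρ s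
  intro l hl B hB
  have hBg : ∑ s ∈ B \ T l, ρ s ≤ g l := hgreedy l B hB
  have hlg : (l : ℝ) * g l ≤ 1 := by
    calc (l : ℝ) * g l = ∑ _i ∈ Finset.range l, g l := by
          rw [Finset.sum_const, Finset.card_range, nsmul_eq_mul]
      _ ≤ ∑ i ∈ Finset.range l, g i := by
          apply Finset.sum_le_sum
          intro i hi
          exact hganti' i l (le_of_lt (Finset.mem_range.mp hi))
      _ = ∑ s ∈ T l, ρ s := (hTsum l).symm
      _ ≤ 1 := hT1 l
  have hlpos : (0 : ℝ) < l := by exact_mod_cast hl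
  calc ∑ s ∈ B \ T l, ρ s ≤ g l := hBg
    _ ≤ 1 / l := by rw [le_div_iff₀ hlpos, mul_comm]; exact hlg
end

section
/- Let X = {0,1} and let C be the set of all Dirac probability measures δ_x on X^∞ concentrated on binary sequences x whose limiting frequency of ones is 1/3 (i.e., lim_{n→∞} (1/n)·|{i ≤ n : x_i = 1}| = 1/3). Then V_C = h(1/3), where h(p) := −p log₂ p − (1−p) log₂(1−p); in particular, the i.i.d. Bernoulli measure β with parameter 1/3 attains sup_{μ∈C} D(μ,β) = h(1/3) = V_C. -/
open MeasureTheory Filter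
open scoped ENNReal

variable {X : Type} [Fintype X] [Nonempty X] [MeasurableSpace X] [DiscreteMeasurableSpace X]

/-- The binary entropy h(p) = −p log₂ p − (1−p) log₂(1−p). -/
noncomputable def binEnt (p : ℝ) : ℝ :=
  -(p * Real.logb 2 p) - (1 - p) * Real.logb 2 (1 - p)


open Finset Real

/-! Upper bound: `-log₂ β[x₁ ⋯ xₙ] = n (log₂ 3 - 1) + #{i < n | xᵢ = 1}`, so along every sequence
of frequency `1/3` the average loss of the Bernoulli(1/3) measure tends to `log₂ 3 - 2/3 = h(1/3)`.

Lower bound: against an arbitrary `ρ` we build an adversarial sequence block by block. Block `t`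
has length `3 (t + 1)` and exactly `t + 1` ones; among the `(3 (t + 1)).choose (t + 1)` admissible
blocks we append the one whose cylinder has the least `ρ`-mass, so after `t` blocks the prefix has
mass at most `∏_{s=1}^t ((3s).choose s)⁻¹`. Since `(3s).choose s ≥ 2 ^ (3 s h(1/3)) / (3s + 1)`, the
average loss at the end of block `t` is at least `h(1/3) - O(log t / t)`. The blocks grow only
linearly while their total length grows quadratically, so the frequency of ones still tends to
`1/3`. -/

def seqPrefix {α : Type} (z : ℕ → α) (n : ℕ) : Fin n → α := fun i => z i

lemma mem_cyl_iff_eq_seqPrefix {α : Type} {n : ℕ} (z : ℕ → α) (y : Fin n → α) :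
    z ∈ cyl y ↔ y = seqPrefix z n :=
  ⟨fun h => funext fun i => (h i).symm, fun h i => by rw [h]; rfl⟩

lemma cyl_eq_biUnion_cyl_append {α : Type} [Fintype α] {a : ℕ} (b : ℕ) (u : Fin a → α) :
    cyl u = ⋃ v ∈ (univ : Finset (Fin b → α)), cyl (Fin.append u v) := by
  ext ω
  simp only [Set.mem_iUnion, mem_univ, exists_true_left]
  constructor
  · intro h
    refine ⟨fun j => ω (a + j), Fin.addCases (fun i => ?_) (fun j => ?_)⟩
    · simpa using h i
    · simp
  · rintro ⟨v, hv⟩ i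
    simpa using hv (Fin.castAdd b i)

section Cylinders

variable {α : Type} [MeasurableSpace α] [MeasurableSingletonClass α]

lemma measurableSet_cyl {n : ℕ} (y : Fin n → α) : MeasurableSet (cyl y) := by
  have : cyl y = ⋂ i : Fin n, (fun ω : ℕ → α => ω i) ⁻¹' {y i} := by
    ext ω; simp [cyl]
  rw [this]
  exact .iInter fun i => measurable_pi_apply _ (measurableSet_singleton _)

lemma klDiv_dirac [Fintype α] (n : ℕ) (z : ℕ → α) (ρ : Measure (ℕ → α)) :
    klDiv n (Measure.dirac z) ρ = klTerm 1 (ρ (cyl (seqPrefix z n))).toReal := by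
  rw [klDiv, Finset.sum_eq_single (seqPrefix z n)]
  · rw [Measure.dirac_apply' _ (measurableSet_cyl _),
      Set.indicator_of_mem ((mem_cyl_iff_eq_seqPrefix z _).2 rfl)]
    simp
  · intro y _ hy
    rw [Measure.dirac_apply' _ (measurableSet_cyl _),
      Set.indicator_of_notMem fun hz => hy ((mem_cyl_iff_eq_seqPrefix z y).1 hz)]
    simp [klTerm]
  · exact fun h => absurd (mem_univ _) h

lemma Dbar_dirac [Fintype α] (z : ℕ → α) (ρ : Measure (ℕ → α)) :
    Dbar (Measure.dirac z) ρ = limsup (fun n : ℕ =>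
      (((n : ℝ)⁻¹ : ℝ) : EReal) * klTerm 1 (ρ (cyl (seqPrefix z n))).toReal) atTop := by
  simp only [Dbar, klDiv_dirac]

lemma sum_measure_cyl_append [Fintype α] (ρ : Measure (ℕ → α)) {a : ℕ} (b : ℕ) (u : Fin a → α) :
    ∑ v : Fin b → α, ρ (cyl (Fin.append u v)) = ρ (cyl u) := by
  rw [cyl_eq_biUnion_cyl_append b u, measure_biUnion_finset _ fun v _ => measurableSet_cyl _]
  intro v _ w _ hvw
  refine Set.disjoint_left.2 fun ω hv hw => hvw (funext fun j => ?_)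
  simpa using (hv (Fin.natAdd a j)).symm.trans (hw (Fin.natAdd a j))

lemma exists_card_mul_measure_cyl_append_le [Fintype α] (ρ : Measure (ℕ → α)) {a b : ℕ}
    (u : Fin a → α) {W : Finset (Fin b → α)} (hW : W.Nonempty) :
    ∃ v ∈ W, (#W : ℝ≥0∞) * ρ (cyl (Fin.append u v)) ≤ ρ (cyl u) := by
  obtain ⟨v, hvW, hmin⟩ := W.exists_min_image (fun v => ρ (cyl (Fin.append u v))) hW
  refine ⟨v, hvW, ?_⟩
  calc (#W : ℝ≥0∞) * ρ (cyl (Fin.append u v))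
      ≤ ∑ w ∈ W, ρ (cyl (Fin.append u w)) := by
        rw [← nsmul_eq_mul]; exact card_nsmul_le_sum W _ _ hmin
    _ ≤ ∑ w, ρ (cyl (Fin.append u w)) := sum_le_sum_of_subset (subset_univ W)
    _ = ρ (cyl u) := sum_measure_cyl_append ρ b u

end Cylinders

def countOnes {m : ℕ} (v : Fin m → Fin 2) : ℕ := #{i | v i = 1}

def onesBelow (x : ℕ → Fin 2) (n : ℕ) : ℕ := #{i ∈ range n | x i = 1}

lemma countOnes_append {a b : ℕ} (u : Fin a → Fin 2) (v : Fin b → Fin 2) :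
    countOnes (Fin.append u v) = countOnes u + countOnes v := by
  simp only [countOnes, card_filter, Fin.sum_univ_add, Fin.append_left, Fin.append_right]

lemma countOnes_seqPrefix (x : ℕ → Fin 2) (n : ℕ) : countOnes (seqPrefix x n) = onesBelow x n := by
  simp only [countOnes, onesBelow, card_filter]
  exact Fin.sum_univ_eq_sum_range (fun i => if x i = 1 then 1 else 0) n

lemma onesBelow_mono (x : ℕ → Fin 2) : Monotone (onesBelow x) := fun _ _ h =>
  card_le_card (filter_subset_filter _ (range_subset_range.2 h))

lemma onesBelow_le_add_sub (x : ℕ → Fin 2) {n m : ℕ} (h : n ≤ m) :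
    onesBelow x m ≤ onesBelow x n + (m - n) := by
  simp only [onesBelow, range_eq_Ico]
  rw [← Ico_union_Ico_eq_Ico (Nat.zero_le n) h, filter_union, ← Nat.card_Ico n m]
  exact (card_union_le _ _).trans (add_le_add le_rfl (card_filter_le _ _))

lemma exists_countOnes_eq_choose_mul_le (ρ : Measure (ℕ → Fin 2)) {a b k : ℕ}
    (u : Fin a → Fin 2) (hk : k ≤ b) :
    ∃ v : Fin b → Fin 2, countOnes v = k ∧
      (b.choose k : ℝ≥0∞) * ρ (cyl (Fin.append u v)) ≤ ρ (cyl u) := by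
  let ind : Finset (Fin b) → Fin b → Fin 2 := fun S i => if i ∈ S then 1 else 0
  have filter_ind (S : Finset (Fin b)) : ({i | ind S i = 1} : Finset (Fin b)) = S := by
    ext i; by_cases hi : i ∈ S <;> simp [ind, hi]
  have hind : Function.Injective ind := fun S T h => by
    rw [← filter_ind S, h, filter_ind]
  classical
  obtain ⟨v, hv, hle⟩ := exists_card_mul_measure_cyl_append_le ρ u
    (W := (powersetCard k univ).image ind) ((powersetCard_nonempty.2 (by simpa using hk)).image ind)
  obtain ⟨S, hS, rfl⟩ := mem_image.1 hv
  refine ⟨ind S, ?_, ?_⟩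
  · rw [countOnes, filter_ind, (mem_powersetCard.1 hS).2]
  · rwa [card_image_of_injective _ hind, card_powersetCard, card_univ, Fintype.card_fin] at hle

def blocksLength : ℕ → ℕ
  | 0 => 0
  | t + 1 => blocksLength t + 3 * (t + 1)

lemma two_mul_blocksLength (t : ℕ) : 2 * blocksLength t = 3 * t * (t + 1) := by
  induction t with
  | zero => rfl
  | succ t ih => rw [blocksLength]; linarith

lemma mul_self_le_blocksLength (t : ℕ) : t * t ≤ blocksLength t := by
  nlinarith [two_mul_blocksLength t]

lemma blocksLength_mono : Monotone blocksLength :=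
  monotone_nat_of_le_succ fun _ => Nat.le_add_right _ _

lemma tendsto_blocksLength_atTop : Tendsto blocksLength atTop atTop :=
  tendsto_atTop_mono (fun t => (Nat.le_mul_self t).trans (mul_self_le_blocksLength t)) tendsto_id

lemma exists_blocksLength_le_lt (n : ℕ) : ∃ t, blocksLength t ≤ n ∧ n < blocksLength (t + 1) := by
  have hex : ∃ t, n < blocksLength (t + 1) := ⟨n, by rw [blocksLength]; omega⟩
  refine ⟨Nat.find hex, ?_, Nat.find_spec hex⟩
  rcases h : Nat.find hex with _ | t
  · exact Nat.zero_le n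
  · exact not_lt.1 (Nat.find_min hex (h ▸ Nat.lt_succ_self t))

lemma blocksLength_eq_sum (t : ℕ) : blocksLength t = ∑ s ∈ range t, 3 * (s + 1) := by
  induction t with
  | zero => rfl
  | succ t ih => rw [sum_range_succ, ← ih, blocksLength]

noncomputable def greedyWord (ρ : Measure (ℕ → Fin 2)) : (t : ℕ) → Fin (blocksLength t) → Fin 2
  | 0 => finZeroElim
  | t + 1 => Fin.append (greedyWord ρ t)
      (exists_countOnes_eq_choose_mul_le ρ (greedyWord ρ t) (b := 3 * (t + 1)) (k := t + 1)
        (by omega)).choose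

lemma countOnes_greedyWord_succ (ρ : Measure (ℕ → Fin 2)) (t : ℕ) :
    countOnes (greedyWord ρ (t + 1)) = countOnes (greedyWord ρ t) + (t + 1) :=
  (countOnes_append _ _).trans (congrArg _ (exists_countOnes_eq_choose_mul_le ρ (greedyWord ρ t)
    (b := 3 * (t + 1)) (k := t + 1) (by omega)).choose_spec.1)

lemma choose_mul_measure_cyl_greedyWord_succ_le (ρ : Measure (ℕ → Fin 2)) (t : ℕ) :
    ((3 * (t + 1)).choose (t + 1) : ℝ≥0∞) * ρ (cyl (greedyWord ρ (t + 1)))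
      ≤ ρ (cyl (greedyWord ρ t)) :=
  (exists_countOnes_eq_choose_mul_le ρ (greedyWord ρ t) (b := 3 * (t + 1)) (k := t + 1)
    (by omega)).choose_spec.2

lemma greedyWord_succ_castAdd (ρ : Measure (ℕ → Fin 2)) (t : ℕ) (i : Fin (blocksLength t)) :
    greedyWord ρ (t + 1) (Fin.castAdd (3 * (t + 1)) i) = greedyWord ρ t i :=
  Fin.append_left _ _ i

lemma three_mul_countOnes_greedyWord (ρ : Measure (ℕ → Fin 2)) (t : ℕ) :
    3 * countOnes (greedyWord ρ t) = blocksLength t := by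
  induction t with
  | zero => rfl
  | succ t ih => rw [countOnes_greedyWord_succ, blocksLength]; omega

lemma prod_choose_mul_measure_cyl_greedyWord_le (ρ : Measure (ℕ → Fin 2))
    [IsProbabilityMeasure ρ] (t : ℕ) :
    (∏ s ∈ range t, ((3 * (s + 1)).choose (s + 1) : ℝ≥0∞)) * ρ (cyl (greedyWord ρ t)) ≤ 1 := by
  induction t with
  | zero => simpa using prob_le_one
  | succ t ih =>
    calc (∏ s ∈ range (t + 1), ((3 * (s + 1)).choose (s + 1) : ℝ≥0∞))
          * ρ (cyl (greedyWord ρ (t + 1)))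
        = (∏ s ∈ range t, ((3 * (s + 1)).choose (s + 1) : ℝ≥0∞))
          * (((3 * (t + 1)).choose (t + 1) : ℝ≥0∞) * ρ (cyl (greedyWord ρ (t + 1)))) := by
          rw [prod_range_succ, mul_assoc]
      _ ≤ 1 := le_trans (by gcongr; exact choose_mul_measure_cyl_greedyWord_succ_le ρ t) ih

lemma greedyWord_castLE (ρ : Measure (ℕ → Fin 2)) {t t' : ℕ} (h : t ≤ t')
    (i : Fin (blocksLength t)) :
    greedyWord ρ t' (Fin.castLE (blocksLength_mono h) i) = greedyWord ρ t i := by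
  induction t', h using Nat.le_induction with
  | base => rfl
  | succ t' ht' ih => exact (greedyWord_succ_castAdd ρ t' _).trans ih

noncomputable def greedySeq (ρ : Measure (ℕ → Fin 2)) (n : ℕ) : Fin 2 :=
  greedyWord ρ (n + 1) ⟨n, by rw [blocksLength]; omega⟩

lemma seqPrefix_greedySeq (ρ : Measure (ℕ → Fin 2)) (t : ℕ) :
    seqPrefix (greedySeq ρ) (blocksLength t) = greedyWord ρ t := by
  funext i
  rcases le_total (i + 1 : ℕ) t with h | h
  · exact (greedyWord_castLE ρ h _).symm
  · exact greedyWord_castLE ρ h i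

lemma three_mul_onesBelow_greedySeq (ρ : Measure (ℕ → Fin 2)) (t : ℕ) :
    3 * onesBelow (greedySeq ρ) (blocksLength t) = blocksLength t := by
  rw [← countOnes_seqPrefix, seqPrefix_greedySeq, three_mul_countOnes_greedyWord]

lemma abs_three_mul_onesBelow_sub_le {x : ℕ → Fin 2}
    (hx : ∀ t, 3 * onesBelow x (blocksLength t) = blocksLength t) (n : ℕ) :
    |3 * (onesBelow x n : ℝ) - n| ≤ 6 * (√n + 1) := by
  obtain ⟨t, hlo, hhi⟩ := exists_blocksLength_le_lt n
  -- `n` lies in block `t`, of length `3 (t + 1)`, and `t ≤ √n` because `t * t ≤ blocksLength t`.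
  have hmono := onesBelow_mono x hlo
  have hsub := onesBelow_le_add_sub x hlo
  have hxt := hx t
  rw [blocksLength] at hhi
  have hup : 3 * onesBelow x n ≤ n + 6 * (t + 1) := by omega
  have hdown : n ≤ 3 * onesBelow x n + 3 * (t + 1) := by omega
  have ht : (t : ℝ) ≤ √n :=
    Real.le_sqrt_of_sq_le <| by
      exact_mod_cast (sq t).trans_le ((mul_self_le_blocksLength t).trans hlo)
  rw [abs_le]
  constructor
  · have : (n : ℝ) ≤ 3 * onesBelow x n + 3 * (t + 1) := by exact_mod_cast hdown
    linarith
  · have : (3 * onesBelow x n : ℝ) ≤ n + 6 * (t + 1) := by exact_mod_cast hup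
    linarith

lemma tendsto_onesBelow_div_of_blocksLength {x : ℕ → Fin 2}
    (hx : ∀ t, 3 * onesBelow x (blocksLength t) = blocksLength t) :
    Tendsto (fun n => (onesBelow x n : ℝ) / n) atTop (nhds (1 / 3)) := by
  rw [← tendsto_sub_nhds_zero_iff]
  have hsqrt : Tendsto (fun n : ℕ => √(n : ℝ)) atTop atTop :=
    Real.tendsto_sqrt_atTop.comp tendsto_natCast_atTop_atTop
  have hbound : Tendsto (fun n : ℕ => 2 * ((√(n : ℝ))⁻¹ + (n : ℝ)⁻¹)) atTop (nhds 0) := by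
    simpa using ((tendsto_inv_atTop_zero.comp hsqrt).add
      (tendsto_inv_atTop_zero.comp tendsto_natCast_atTop_atTop)).const_mul 2
  refine squeeze_zero_norm' ?_ hbound
  filter_upwards [eventually_gt_atTop 0] with n hn
  have hn' : (0 : ℝ) < n := by exact_mod_cast hn
  calc ‖(onesBelow x n : ℝ) / n - 1 / 3‖ = |3 * (onesBelow x n : ℝ) - n| / (3 * n) := by
        rw [Real.norm_eq_abs, ← abs_of_pos (by positivity : (0 : ℝ) < 3 * n), ← abs_div]
        congr 1; field_simp
    _ ≤ 6 * (√n + 1) / (3 * n) := by gcongr; exact abs_three_mul_onesBelow_sub_le hx n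
    _ = 2 * ((√(n : ℝ))⁻¹ + (n : ℝ)⁻¹) := by
        field_simp
        linear_combination 6 * Real.mul_self_sqrt hn'.le

lemma tendsto_onesBelow_greedySeq_div (ρ : Measure (ℕ → Fin 2)) :
    Tendsto (fun n => (onesBelow (greedySeq ρ) n : ℝ) / n) atTop (nhds (1 / 3)) :=
  tendsto_onesBelow_div_of_blocksLength (three_mul_onesBelow_greedySeq ρ)

lemma choose_three_mul_succ_mul (s : ℕ) :
    (3 * s + 3).choose (s + 1) * ((s + 1) * (2 * s + 1) * (2 * s + 2))
      = (3 * s + 1) * (3 * s + 2) * (3 * s + 3) * (3 * s).choose s := by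
  have h1 := Nat.add_one_mul_choose_eq (3 * s) s
  have h2 :
      (3 * s + 1).choose (s + 1) * (3 * s + 2) = (3 * s + 2).choose (s + 1) * (2 * s + 1) := by
    have := Nat.choose_mul_succ_eq (3 * s + 1) (s + 1)
    rwa [show 3 * s + 1 + 1 - (s + 1) = 2 * s + 1 by omega] at this
  have h3 :
      (3 * s + 2).choose (s + 1) * (3 * s + 3) = (3 * s + 3).choose (s + 1) * (2 * s + 2) := by
    have := Nat.choose_mul_succ_eq (3 * s + 2) (s + 1)
    rwa [show 3 * s + 2 + 1 - (s + 1) = 2 * s + 2 by omega] at this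
  zify at h1 h2 h3 ⊢
  linear_combination (-(s + 1) * (2 * s + 1) : ℤ) * h3 - ((s + 1) * (3 * s + 3) : ℤ) * h2
    - ((3 * s + 2) * (3 * s + 3) : ℤ) * h1

-- The entropy bound `n.choose k ≥ 2 ^ (n h(k/n)) / (n + 1)` at `n = 3s`, `k = s`, where
-- `2 ^ (3 h(1/3)) = 27 / 4`.
lemma twentySeven_pow_le_choose_three_mul (s : ℕ) :
    27 ^ s ≤ (3 * s + 1) * (3 * s).choose s * 4 ^ s := by
  induction s with
  | zero => simp
  | succ s ih =>
    have hP : 0 < (s + 1) * (2 * s + 1) * (2 * s + 2) := by positivity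
    have hpoly : 27 * ((s + 1) * (2 * s + 1) * (2 * s + 2))
        ≤ 4 * ((3 * s + 4) * (3 * s + 2) * (3 * s + 3)) := by nlinarith
    rw [show 3 * (s + 1) = 3 * s + 3 by ring]
    refine Nat.le_of_mul_le_mul_right ?_ hP
    calc 27 ^ (s + 1) * ((s + 1) * (2 * s + 1) * (2 * s + 2))
        = 27 * ((s + 1) * (2 * s + 1) * (2 * s + 2)) * 27 ^ s := by ring
      _ ≤ 4 * ((3 * s + 4) * (3 * s + 2) * (3 * s + 3))
          * ((3 * s + 1) * (3 * s).choose s * 4 ^ s) := Nat.mul_le_mul hpoly ih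
      _ = (3 * s + 4) * 4 ^ (s + 1)
          * ((3 * s + 1) * (3 * s + 2) * (3 * s + 3) * (3 * s).choose s) := by ring
      _ = (3 * s + 3 + 1) * (3 * s + 3).choose (s + 1) * 4 ^ (s + 1)
          * ((s + 1) * (2 * s + 1) * (2 * s + 2)) := by
        rw [← choose_three_mul_succ_mul]; ring

lemma binEnt_one_third : binEnt (1 / 3) = logb 2 3 - 2 / 3 := by
  rw [binEnt, show (1 : ℝ) - 1 / 3 = 2 / 3 by norm_num, logb_div (by norm_num) (by norm_num),
    logb_div (by norm_num) (by norm_num), logb_one, logb_self_eq_one one_lt_two]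
  ring

lemma three_mul_binEnt_sub_logb_le_logb_choose (s : ℕ) :
    3 * s * binEnt (1 / 3) - logb 2 (3 * s + 1) ≤ logb 2 ((3 * s).choose s) := by
  have hchoose : (0 : ℝ) < (3 * s).choose s := by exact_mod_cast Nat.choose_pos (by omega)
  have h : (27 : ℝ) ^ s ≤ (3 * s + 1) * (3 * s).choose s * 4 ^ s := by
    exact_mod_cast twentySeven_pow_le_choose_three_mul s
  have hlog := logb_le_logb_of_le one_lt_two (by positivity) h
  rw [logb_mul (by positivity) (by positivity), logb_mul (by positivity) hchoose.ne',
    logb_pow, logb_pow, show (27 : ℝ) = 3 ^ 3 by norm_num,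
    show (4 : ℝ) = 2 ^ 2 by norm_num, logb_pow, logb_pow,
    logb_self_eq_one one_lt_two] at hlog
  rw [binEnt_one_third]
  push_cast at hlog
  linarith

lemma blocksLength_mul_binEnt_sub_le_logb_prod_choose (t : ℕ) :
    blocksLength t * binEnt (1 / 3) - ∑ s ∈ range t, logb 2 (3 * ((s : ℝ) + 1) + 1)
      ≤ logb 2 (∏ s ∈ range t, ((3 * (s + 1)).choose (s + 1) : ℝ)) := by
  rw [logb_prod _ _ fun s _ => by exact_mod_cast (Nat.choose_pos (by omega)).ne',
    blocksLength_eq_sum, Nat.cast_sum, sum_mul, ← sum_sub_distrib]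
  refine sum_le_sum fun s _ => ?_
  have := three_mul_binEnt_sub_logb_le_logb_choose (s + 1)
  push_cast at this ⊢
  exact this

lemma tendsto_sum_logb_div_blocksLength :
    Tendsto (fun t : ℕ => (∑ s ∈ range t, logb 2 (3 * ((s : ℝ) + 1) + 1)) / blocksLength t)
      atTop (nhds 0) := by
  have hlog : Tendsto (fun t : ℕ => log t / t) atTop (nhds 0) :=
    Real.isLittleO_log_id_atTop.tendsto_div_nhds_zero.comp tendsto_natCast_atTop_atTop
  have hbound : Tendsto (fun t : ℕ => 2 * (t : ℝ)⁻¹ + log t / t / log 2) atTop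
      (nhds 0) := by
    simpa using (tendsto_inv_atTop_zero.comp tendsto_natCast_atTop_atTop).const_mul 2 |>.add
      (hlog.div_const (log 2))
  refine squeeze_zero' (Eventually.of_forall fun t => ?_) ?_ hbound
  · refine div_nonneg (sum_nonneg fun s _ => logb_nonneg one_lt_two ?_) (Nat.cast_nonneg _)
    linarith [s.cast_nonneg (α := ℝ)]
  filter_upwards [eventually_ge_atTop 1] with t ht
  have ht' : (1 : ℝ) ≤ t := by exact_mod_cast ht
  have hsum : ∑ s ∈ range t, logb 2 (3 * ((s : ℝ) + 1) + 1) ≤ t * logb 2 (4 * t) := by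
    refine (sum_le_card_nsmul _ _ (logb 2 (4 * t)) fun s hs => ?_).trans (by simp)
    have : (s : ℝ) + 1 ≤ t := by exact_mod_cast mem_range.1 hs
    exact logb_le_logb_of_le one_lt_two (by positivity) (by linarith)
  have hlen : (t : ℝ) * t ≤ blocksLength t := by exact_mod_cast mul_self_le_blocksLength t
  calc (∑ s ∈ range t, logb 2 (3 * ((s : ℝ) + 1) + 1)) / blocksLength t
      ≤ t * logb 2 (4 * t) / (t * t) := by
        gcongr
        exact mul_nonneg (by positivity) (logb_nonneg one_lt_two (by linarith))
    _ = 2 * (t : ℝ)⁻¹ + log t / t / log 2 := by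
        rw [logb_mul (by norm_num) (by positivity), show (4 : ℝ) = 2 ^ 2 by norm_num,
          logb_pow, logb_self_eq_one one_lt_two, logb]
        field_simp
        ring

lemma klTerm_one_of_ne_zero {q : ℝ} (hq : q ≠ 0) : klTerm 1 q = ((-logb 2 q : ℝ) : EReal) := by
  rw [klTerm, if_neg one_ne_zero, if_neg hq, one_mul, one_div, logb_inv]

lemma coe_le_inv_mul_klTerm_one {n q c : ℝ} (hn : 0 < n) (hq : 0 ≤ q) (hc : 0 < c)
    (h : c * q ≤ 1) : ((n⁻¹ * logb 2 c : ℝ) : EReal) ≤ ((n⁻¹ : ℝ) : EReal) * klTerm 1 q := by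
  rcases hq.eq_or_lt with rfl | hq
  · simp [klTerm, EReal.coe_mul_top_of_pos (inv_pos.2 hn)]
  rw [klTerm_one_of_ne_zero hq.ne', ← EReal.coe_mul, EReal.coe_le_coe_iff]
  have : logb 2 (c * q) ≤ 0 := logb_nonpos one_lt_two (by positivity) h
  rw [logb_mul hc.ne' hq.ne'] at this
  gcongr
  linarith

section Bernoulli

variable {β : Measure (ℕ → Fin 2)}
  (hβcyl : ∀ (n : ℕ) (y : Fin n → Fin 2),
    β (cyl y) = ∏ i : Fin n, (if y i = 1 then (1 / 3 : ℝ≥0∞) else 2 / 3))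
include hβcyl

lemma toReal_measure_cyl_of_bernoulli {n : ℕ} (y : Fin n → Fin 2) :
    (β (cyl y)).toReal = ∏ i, if y i = 1 then (1 / 3 : ℝ) else 2 / 3 := by
  rw [hβcyl, ENNReal.toReal_prod]
  congr 1; ext i; split_ifs <;> simp

lemma neg_logb_measure_cyl_of_bernoulli {n : ℕ} (y : Fin n → Fin 2) :
    -logb 2 (β (cyl y)).toReal = n * (logb 2 3 - 1) + countOnes y := by
  have hterm (i : Fin n) : -logb 2 (if y i = 1 then (1 / 3 : ℝ) else 2 / 3)
      = (logb 2 3 - 1) + if y i = 1 then 1 else 0 := by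
    split_ifs
    · rw [one_div, logb_inv]; ring
    · rw [logb_div (by norm_num) (by norm_num), logb_self_eq_one one_lt_two]; ring
  rw [toReal_measure_cyl_of_bernoulli hβcyl, logb_prod _ _ fun i _ => by split_ifs <;> norm_num,
    ← sum_neg_distrib, sum_congr rfl fun i _ => hterm i, sum_add_distrib, countOnes, card_filter]
  simp only [sum_const, card_univ, Fintype.card_fin, nsmul_eq_mul, Nat.cast_sum, Nat.cast_ite,
    Nat.cast_one, Nat.cast_zero]

lemma Dbar_dirac_of_bernoulli {x : ℕ → Fin 2}
    (hx : Tendsto (fun n => (onesBelow x n : ℝ) / n) atTop (nhds (1 / 3))) :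
    Dbar (Measure.dirac x) β = ((binEnt (1 / 3) : ℝ) : EReal) := by
  have hlim : Tendsto (fun n => logb 2 3 - 1 + (onesBelow x n : ℝ) / n) atTop
      (nhds (binEnt (1 / 3))) := by
    rw [binEnt_one_third]
    convert hx.const_add (logb 2 3 - 1) using 2
    ring
  rw [Dbar_dirac]
  refine ((continuous_coe_real_ereal.tendsto _).comp hlim |>.congr' ?_).limsup_eq
  filter_upwards [eventually_gt_atTop 0] with n hn
  have hq : (β (cyl (seqPrefix x n))).toReal ≠ 0 := by
    rw [toReal_measure_cyl_of_bernoulli hβcyl]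
    exact prod_ne_zero_iff.2 fun i _ => by split_ifs <;> norm_num
  rw [Function.comp_apply, klTerm_one_of_ne_zero hq, neg_logb_measure_cyl_of_bernoulli hβcyl,
    countOnes_seqPrefix, ← EReal.coe_mul]
  congr 1
  field_simp

end Bernoulli

lemma binEnt_le_Dbar_dirac_greedySeq (ρ : Measure (ℕ → Fin 2)) [IsProbabilityMeasure ρ] :
    ((binEnt (1 / 3) : ℝ) : EReal) ≤ Dbar (Measure.dirac (greedySeq ρ)) ρ := by
  set err := fun t : ℕ =>
    (∑ s ∈ range t, logb 2 (3 * ((s : ℝ) + 1) + 1)) / blocksLength t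
  have hlim : Tendsto (fun t => ((binEnt (1 / 3) - err t : ℝ) : EReal)) atTop
      (nhds (binEnt (1 / 3) : ℝ)) := by
    have := tendsto_sum_logb_div_blocksLength.const_sub (binEnt (1 / 3))
    rw [sub_zero] at this
    exact (continuous_coe_real_ereal.tendsto _).comp this
  rw [Dbar_dirac, ← hlim.limsup_eq]
  refine le_trans (limsup_le_limsup ?_) tendsto_blocksLength_atTop.limsup_comp_le_limsup
  filter_upwards [eventually_gt_atTop 0] with t ht
  have hlen : (0 : ℝ) < blocksLength t :=
    Nat.cast_pos.2 ((Nat.mul_self_le_mul_self ht).trans (mul_self_le_blocksLength t))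
  set c := ∏ s ∈ range t, ((3 * (s + 1)).choose (s + 1) : ℝ)
  have hc : 0 < c := prod_pos fun s _ => by exact_mod_cast Nat.choose_pos (by omega)
  have hcq : c * (ρ (cyl (seqPrefix (greedySeq ρ) (blocksLength t)))).toReal ≤ 1 := by
    have := ENNReal.toReal_mono ENNReal.one_ne_top (prod_choose_mul_measure_cyl_greedyWord_le ρ t)
    simpa [seqPrefix_greedySeq, ENNReal.toReal_mul, ENNReal.toReal_prod, c] using this
  refine le_trans ?_ (coe_le_inv_mul_klTerm_one hlen ENNReal.toReal_nonneg hc hcq)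
  rw [EReal.coe_le_coe_iff]
  have hchoose := blocksLength_mul_binEnt_sub_le_logb_prod_choose t
  calc binEnt (1 / 3) - err t
      = (blocksLength t : ℝ)⁻¹ * (blocksLength t * binEnt (1 / 3)
          - ∑ s ∈ range t, logb 2 (3 * ((s : ℝ) + 1) + 1)) := by
        simp only [err]
        field_simp
    _ ≤ (blocksLength t : ℝ)⁻¹ * logb 2 c := by gcongr

/-- for C the set of Dirac measures on binary sequences whose limiting
frequency of ones is 1/3, V_C = h(1/3); in particular the i.i.d. Bernoulli(1/3)
measure β attains sup_{μ∈C} D(μ,β) = h(1/3) = V_C. -/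
theorem statement14
    (C : Set (Measure (ℕ → Fin 2)))
    (hC : C = {m : Measure (ℕ → Fin 2) | ∃ x : ℕ → Fin 2,
      Filter.Tendsto
        (fun n : ℕ => (((Finset.range n).filter (fun i => x i = 1)).card : ℝ) / n)
        Filter.atTop (nhds (1 / 3)) ∧ m = Measure.dirac x})
    (β : Measure (ℕ → Fin 2)) (hβ : IsProbabilityMeasure β)
    (hβcyl : ∀ (n : ℕ) (y : Fin n → Fin 2),
      β (cyl y) = ∏ i : Fin n, (if y i = 1 then (1 / 3 : ℝ≥0∞) else 2 / 3)) :
    Vmin C = ((binEnt (1 / 3) : ℝ) : EReal) ∧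
    (⨆ μ ∈ C, Dbar μ β) = ((binEnt (1 / 3) : ℝ) : EReal) := by
  have greedy_mem (ρ : Measure (ℕ → Fin 2)) : Measure.dirac (greedySeq ρ) ∈ C := by
    rw [hC]
    exact ⟨_, tendsto_onesBelow_greedySeq_div ρ, rfl⟩
  have hsup : (⨆ μ ∈ C, Dbar μ β) = ((binEnt (1 / 3) : ℝ) : EReal) := by
    refine le_antisymm (iSup₂_le fun μ hμ => ?_) ?_
    · rw [hC] at hμ
      obtain ⟨x, hx, rfl⟩ := hμ
      exact (Dbar_dirac_of_bernoulli hβcyl hx).le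
    · rw [← Dbar_dirac_of_bernoulli hβcyl (tendsto_onesBelow_greedySeq_div β)]
      exact le_biSup (fun μ => Dbar μ β) (greedy_mem β)
  refine ⟨le_antisymm ?_ (le_iInf fun ⟨ρ, hρ⟩ => ?_), hsup⟩
  · exact (iInf_le (fun ρ : {ρ : Measure (ℕ → Fin 2) // IsProbabilityMeasure ρ} =>
      ⨆ μ ∈ C, Dbar μ ρ.1) ⟨β, hβ⟩).trans hsup.le
  · exact (binEnt_le_Dbar_dirac_greedySeq ρ).trans (le_biSup (fun μ => Dbar μ ρ) (greedy_mem ρ))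
end
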